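/- Let k ≥ 2 be an integer and let a ∈ ℂ with a ∉ {0, 1, −1}. Then there exist matrices B, C ∈ GL_2(ℂ) with B^k = I and C^k = I such that (B·C)^k = diag(a, a^{-1}). Consequently, diag(a, a^{-1}) is a product of 2k−3 commutators of powers of two elements of order dividing k in GL_2(ℂ). -/

import Mathlib

/-!
Fix a primitive `k`-th root of unity `ω` and a `k`-th root `μ` of `a`; since `a ≠ ±1`, `μ ≠ -1`.
By Cayley–Hamilton, a `2 × 2` matrix with trace `1 + ζ` and determinant `ζ`, where `ζ ≠ 1` is a
`k`-th root of unity, satisfies `(ζ - 1) M ^ n = (ζ ^ n - 1) M + (ζ - ζ ^ n)`, hence `M ^ k = 1`.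
With `s = (1 + ω) / (1 + μ)`, the matrix `B = [[μ s, 1], [μ s² - ω, s]]` has trace `1 + ω` and
determinant `ω`, and `C = B⁻¹ diag(μ, μ⁻¹) = ω⁻¹ adj(B) diag(μ, μ⁻¹)` has trace `1 + ω⁻¹` and
determinant `ω⁻¹`. So `B ^ k = C ^ k = 1` and `(BC) ^ k = diag(a, a⁻¹)`. Finally the product of
commutators telescopes to `(BC) ^ (k-1) B ^ (1-k) C ^ (1-k) = (BC) ^ (k-1) B C = (BC) ^ k`.
-/

open scoped commutatorElement

section Telescoping

variable {G : Type*} [Group G]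

theorem commutatorElement_mul_prod_range (B C : G) (n : ℕ) :
    ⁅B, C⁆ * ((List.range n).map
      (fun m => ⁅C ^ (m + 1), B ^ (m + 2)⁆ * ⁅B ^ (m + 2), C ^ (m + 2)⁆)).prod
    = (B * C) ^ (n + 1) * (B ^ (n + 1))⁻¹ * (C ^ (n + 1))⁻¹ := by
  induction n with
  | zero => simp [commutatorElement_def]
  | succ n ih =>
    rw [List.range_succ, List.map_append, List.prod_append, ← mul_assoc, ih]
    simp only [List.map_singleton, List.prod_singleton, commutatorElement_def, pow_succ]
    group

theorem commutatorElement_mul_prod_range_eq_mul_pow {B C : G} {k : ℕ} (hk : 2 ≤ k)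
    (hB : B ^ k = 1) (hC : C ^ k = 1) :
    ⁅B, C⁆ * ((List.range (k - 2)).map
      (fun m => ⁅C ^ (m + 1), B ^ (m + 2)⁆ * ⁅B ^ (m + 2), C ^ (m + 2)⁆)).prod
    = (B * C) ^ k := by
  obtain ⟨n, rfl⟩ := Nat.exists_eq_add_of_le' hk
  have hB' : (B ^ (n + 1))⁻¹ = B := inv_eq_of_mul_eq_one_right (by rwa [← pow_succ])
  have hC' : (C ^ (n + 1))⁻¹ = C := inv_eq_of_mul_eq_one_right (by rwa [← pow_succ])
  rw [Nat.add_sub_cancel, commutatorElement_mul_prod_range, hB', hC', mul_assoc, ← pow_succ]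

end Telescoping

section AnnihilatedByQuadratic

variable {K A : Type*} [Field K] [Ring A] [Algebra K A] {x : A} {ζ : K}

theorem sub_one_smul_pow_of_sq_eq (hx : x ^ 2 = (1 + ζ) • x - ζ • 1) (n : ℕ) :
    (ζ - 1) • x ^ n = (ζ ^ n - 1) • x + (ζ - ζ ^ n) • 1 := by
  induction n with
  | zero => simp
  | succ n ih =>
    rw [pow_succ, ← smul_mul_assoc, ih, add_mul, smul_mul_assoc, smul_mul_assoc, one_mul, ← sq]
    linear_combination (norm := module) (ζ ^ n - 1) • hx

theorem pow_eq_one_of_sq_eq {k : ℕ} (hx : x ^ 2 = (1 + ζ) • x - ζ • 1) (hζ : ζ ^ k = 1)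
    (hζ1 : ζ ≠ 1) : x ^ k = 1 := by
  have h := sub_one_smul_pow_of_sq_eq hx k
  rw [hζ, sub_self, zero_smul, zero_add] at h
  exact smul_right_injective A (sub_ne_zero.2 hζ1) h

end AnnihilatedByQuadratic

namespace Matrix

variable {K : Type*} [Field K]

theorem sq_eq_trace_smul_sub_det_smul (M : Matrix (Fin 2) (Fin 2) K) :
    M ^ 2 = M.trace • M - M.det • 1 := by
  have h := M.aeval_self_charpoly
  rw [charpoly_fin_two] at h
  simp only [map_add, map_sub, map_mul, map_pow, Polynomial.aeval_X, Polynomial.aeval_C,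
    Algebra.algebraMap_eq_smul_one, smul_mul_assoc, one_mul] at h
  linear_combination (norm := module) h

theorem pow_eq_one_of_trace_of_det {M : Matrix (Fin 2) (Fin 2) K} {ζ : K} {k : ℕ}
    (htr : M.trace = 1 + ζ) (hdet : M.det = ζ) (hζ : ζ ^ k = 1) (hζ1 : ζ ≠ 1) : M ^ k = 1 :=
  pow_eq_one_of_sq_eq (by rw [sq_eq_trace_smul_sub_det_smul, htr, hdet]) hζ hζ1

theorem exists_pow_eq_one_mul_eq_diagonal {k : ℕ} {ω μ : K} (hω : IsPrimitiveRoot ω k)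
    (hk : 1 < k) (hμ0 : μ ≠ 0) (hμ1 : μ ≠ -1) :
    ∃ B C : Matrix (Fin 2) (Fin 2) K, B ^ k = 1 ∧ C ^ k = 1 ∧ B * C = diagonal ![μ, μ⁻¹] := by
  have hω0 : ω ≠ 0 := hω.ne_zero (by omega)
  have hs : (1 + μ) * ((1 + ω) / (1 + μ)) = 1 + ω :=
    mul_div_cancel₀ _ (by rwa [add_comm, Ne, add_eq_zero_iff_eq_neg])
  set s := (1 + ω) / (1 + μ)
  refine ⟨!![μ * s, 1; μ * s ^ 2 - ω, s], ω⁻¹ • !![μ * s, -μ⁻¹; (ω - μ * s ^ 2) * μ, s],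
    pow_eq_one_of_trace_of_det ?_ ?_ hω.pow_eq_one (hω.ne_one hk),
    pow_eq_one_of_trace_of_det ?_ ?_ hω.inv.pow_eq_one (inv_ne_one.2 (hω.ne_one hk)), ?_⟩
  · rw [trace_fin_two_of]
    linear_combination hs
  · rw [det_fin_two_of]
    ring
  · rw [trace_smul, trace_fin_two_of, smul_eq_mul]
    field_simp
    linear_combination hs
  · rw [det_smul, det_fin_two_of, Fintype.card_fin]
    field_simp
    ring
  · rw [mul_smul_comm, mul_fin_two, smul_of, diagonal_fin_two]
    ext i j
    fin_cases i <;> fin_cases j <;> simp [hω0] <;> field_simp <;> ring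

end Matrix

/-- For `k ≥ 2` and `a ∈ ℂ \ {0, 1, -1}`, there are `B, C ∈ GL_2(ℂ)` with
`B^k = 1` and `C^k = 1` such that `(BC)^k = diag(a, a⁻¹)`; consequently
`diag(a, a⁻¹)` equals the product of the `2k-3` commutators
`⁅B,C⁆ * ∏_{j=2}^{k-1} (⁅C^(j-1), B^j⁆ * ⁅B^j, C^j⁆)` of powers of `B` and `C`. -/
theorem stmt13 (k : ℕ) (hk : 2 ≤ k) (a : ℂ) (ha0 : a ≠ 0) (ha1 : a ≠ 1) (ham1 : a ≠ -1) :
    ∃ B C : GL (Fin 2) ℂ,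
      B ^ k = 1 ∧ C ^ k = 1 ∧
      (((B * C) ^ k : GL (Fin 2) ℂ) : Matrix (Fin 2) (Fin 2) ℂ) = !![a, 0; 0, a⁻¹] ∧
      ((⁅B, C⁆ *
        (((List.range (k - 2)).map
          (fun m => ⁅C ^ (m + 1), B ^ (m + 2)⁆ * ⁅B ^ (m + 2), C ^ (m + 2)⁆)).prod) :
            GL (Fin 2) ℂ) : Matrix (Fin 2) (Fin 2) ℂ) = !![a, 0; 0, a⁻¹] := by
  obtain ⟨μ, rfl⟩ := IsAlgClosed.exists_pow_nat_eq a (by omega : 0 < k)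
  have hμ0 : μ ≠ 0 := by rintro rfl; exact ha0 (zero_pow (by omega))
  have hμ1 : μ ≠ -1 := by
    rintro rfl
    rcases neg_one_pow_eq_or ℂ k with h | h
    exacts [ha1 h, ham1 h]
  obtain ⟨B, C, hB, hC, hBC⟩ := Matrix.exists_pow_eq_one_mul_eq_diagonal
    (Complex.isPrimitiveRoot_exp k (by omega)) (by omega) hμ0 hμ1
  have hBk := Units.pow_ofPowEqOne hB (by omega)
  have hCk := Units.pow_ofPowEqOne hC (by omega)
  have hBCk : ((Units.ofPowEqOne B k hB (by omega) * Units.ofPowEqOne C k hC (by omega)) ^ k :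
      GL (Fin 2) ℂ) = !![μ ^ k, 0; 0, (μ ^ k)⁻¹] := by
    rw [Units.val_pow_eq_pow_val, Units.val_mul, Units.val_ofPowEqOne, Units.val_ofPowEqOne, hBC,
      Matrix.diagonal_pow, Matrix.diagonal_fin_two]
    simp
  exact ⟨_, _, hBk, hCk, hBCk, by rw [commutatorElement_mul_prod_range_eq_mul_pow hk hBk hCk, hBCk]⟩
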